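/- arXiv:1011.5585 — 2 statements merged into one kernel-verified Lean document; each statement's English description precedes it below -/
import Mathlib

section
/- Fix a nonnegative integer n, real numbers a, b, c, d such that none of a+b, a+c, a+d lies in {0, −1, …, −(n−1)}, and a real number x. Let φ : (0,1) → ℝ be any function satisfying φ(q) − (1 − ½(1−q)² x) = o((1−q)²) as q tends to 1 from the left. Then lim_{q↑1} (1−q)^{−3n} p_n( φ(q) ; q^a, q^b, q^c, q^d | q ) = W_n(x; a, b, c, d). -/
open Filter Topology Asymptotics

/-- The `q`-shifted factorial `(z;q)_k = ∏_{j=0}^{k-1} (1 - z q^j)`. -/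
noncomputable def qPoch (q z : ℝ) (k : ℕ) : ℝ :=
  ∏ j ∈ Finset.range k, (1 - z * q ^ j)

/-- The rising factorial (Pochhammer symbol) `(z)_k = z (z+1) ⋯ (z+k-1)`. -/
noncomputable def poch (z : ℝ) (k : ℕ) : ℝ :=
  ∏ j ∈ Finset.range k, (z + (j : ℝ))

/-- The big `q`-Jacobi polynomial `P_n(x;a,b,c;q)`. -/
noncomputable def bigQJacobi (q a b c : ℝ) (n : ℕ) (x : ℝ) : ℝ :=
  ∑ k ∈ Finset.range (n + 1),
    qPoch q ((q : ℝ) ^ (-(n : ℤ))) k * qPoch q (q ^ (n + 1) * a * b) k *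
      qPoch q x k * q ^ k /
      (qPoch q (q * a) k * qPoch q (q * c) k * qPoch q q k)

/-- The `q`-Racah polynomial `R_n(x; α, β, q^{-N-1}, δ | q)`, written as a polynomial in `x`. -/
noncomputable def qRacahPoly (q α β δ : ℝ) (N : ℕ) (n : ℕ) (x : ℝ) : ℝ :=
  ∑ k ∈ Finset.range (n + 1),
    qPoch q ((q : ℝ) ^ (-(n : ℤ))) k * qPoch q (q ^ (n + 1) * α * β) k * q ^ k /
      (qPoch q (q * α) k * qPoch q (q * β * δ) k * qPoch q q k) *
      ∏ j ∈ Finset.range k,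
        (1 - q ^ j * x + (q : ℝ) ^ (2 * (j : ℤ) - (N : ℤ)) * δ) /
          (1 - (q : ℝ) ^ ((j : ℤ) - (N : ℤ)))

/-- The `q`-Hahn polynomial `Q_n(X; α, β, N; q)`, written as a polynomial in `X`. -/
noncomputable def qHahn (q α β : ℝ) (N : ℕ) (n : ℕ) (X : ℝ) : ℝ :=
  ∑ k ∈ Finset.range (n + 1),
    qPoch q ((q : ℝ) ^ (-(n : ℤ))) k * qPoch q (q ^ (n + 1) * α * β) k *
      qPoch q X k * q ^ k /
      (qPoch q (q * α) k * qPoch q ((q : ℝ) ^ (-(N : ℤ))) k * qPoch q q k)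

/-- The little `q`-Jacobi polynomial `p_n(x; a, b; q)`. -/
noncomputable def littleQJacobi (q a b : ℝ) (n : ℕ) (x : ℝ) : ℝ :=
  ∑ k ∈ Finset.range (n + 1),
    qPoch q ((q : ℝ) ^ (-(n : ℤ))) k * qPoch q (a * b * q ^ (n + 1)) k /
      (qPoch q (a * q) k * qPoch q q k) * (q * x) ^ k

/-- The Askey–Wilson polynomial `p_n(x; a, b, c, d | q)`, written as a polynomial in `x`. -/
noncomputable def askeyWilson (q a b c d : ℝ) (n : ℕ) (x : ℝ) : ℝ :=
  a ^ (-(n : ℤ)) * qPoch q (a * b) n * qPoch q (a * c) n * qPoch q (a * d) n *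
    ∑ k ∈ Finset.range (n + 1),
      qPoch q ((q : ℝ) ^ (-(n : ℤ))) k *
        qPoch q (a * b * c * d * (q : ℝ) ^ ((n : ℤ) - 1)) k * q ^ k /
        (qPoch q (a * b) k * qPoch q (a * c) k * qPoch q (a * d) k * qPoch q q k) *
        ∏ j ∈ Finset.range k, (1 - 2 * a * q ^ j * x + a ^ 2 * q ^ (2 * j))

/-- The Wilson polynomial `W_n(x; a, b, c, d)`, written as a polynomial in `x`. -/
noncomputable def wilson (a b c d : ℝ) (n : ℕ) (x : ℝ) : ℝ :=
  poch (a + b) n * poch (a + c) n * poch (a + d) n *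
    ∑ k ∈ Finset.range (n + 1),
      poch (-(n : ℝ)) k * poch ((n : ℝ) + a + b + c + d - 1) k /
        (poch (a + b) k * poch (a + c) k * poch (a + d) k * (Nat.factorial k : ℝ)) *
        ∏ j ∈ Finset.range k, ((a + (j : ℝ)) ^ 2 + x)

/-- The Racah polynomial `R_n(x; α, β, -N-1, δ)`, written as a polynomial in `x`. -/
noncomputable def racah (α β δ : ℝ) (N : ℕ) (n : ℕ) (x : ℝ) : ℝ :=
  ∑ k ∈ Finset.range (n + 1),
    poch (-(n : ℝ)) k * poch ((n : ℝ) + α + β + 1) k /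
      (poch (α + 1) k * poch (β + δ + 1) k * poch (-(N : ℝ)) k * (Nat.factorial k : ℝ)) *
      ∏ j ∈ Finset.range k, ((j : ℝ) * (δ - (N : ℝ) + (j : ℝ)) - x)

/-- The Hahn polynomial `Q_n(x; α, β, N)`. -/
noncomputable def hahn (α β : ℝ) (N : ℕ) (n : ℕ) (x : ℝ) : ℝ :=
  ∑ k ∈ Finset.range (n + 1),
    poch (-(n : ℝ)) k * poch ((n : ℝ) + α + β + 1) k * poch (-x) k /
      (poch (α + 1) k * poch (-(N : ℝ)) k * (Nat.factorial k : ℝ))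

section AWAux

open Finset

/-- `(1 - q^z)/(1-q)`, tending to `z` as `q → 1`. -/
noncomputable def awE (z q : ℝ) : ℝ := (1 - q ^ z) / (1 - q)

lemma awE_tendsto (z : ℝ) :
    Tendsto (fun q => awE z q) (𝓝[Set.Ioo (0:ℝ) 1] 1) (𝓝 z) := by
  have h : HasDerivAt (fun q : ℝ => q ^ z) (z * (1:ℝ) ^ (z - 1)) 1 :=
    Real.hasDerivAt_rpow_const (Or.inl one_ne_zero)
  rw [Real.one_rpow, mul_one] at h
  have h2 : Tendsto (slope (fun q : ℝ => q ^ z) 1) (𝓝[≠] (1:ℝ)) (𝓝 z) :=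
    hasDerivAt_iff_tendsto_slope.mp h
  have h3 : Tendsto (slope (fun q : ℝ => q ^ z) 1) (𝓝[Set.Ioo (0:ℝ) 1] 1) (𝓝 z) :=
    h2.mono_left (nhdsWithin_mono _ fun y hy => ne_of_lt hy.2)
  refine h3.congr fun q => ?_
  rw [slope_def_field, Real.one_rpow, awE,
    show (1:ℝ) - q ^ z = -(q ^ z - 1) by ring, show (1:ℝ) - q = -(q - 1) by ring,
    neg_div_neg_eq]

lemma awRpow_tendsto (s : ℝ) :
    Tendsto (fun q : ℝ => q ^ s) (𝓝[Set.Ioo (0:ℝ) 1] 1) (𝓝 1) := by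
  have h := (Real.continuousAt_rpow_const 1 s (Or.inl one_ne_zero)).tendsto
  rw [Real.one_rpow] at h
  exact h.mono_left nhdsWithin_le_nhds

lemma awG_tendsto (s x : ℝ) (φ : ℝ → ℝ)
    (hφ : (fun q : ℝ => φ q - (1 - (1 - q) ^ 2 * x / 2))
      =o[𝓝[Set.Ioo (0 : ℝ) 1] 1] fun q : ℝ => (1 - q) ^ 2) :
    Tendsto (fun q : ℝ => (1 - 2 * q ^ s * φ q + q ^ (2 * s)) / (1 - q) ^ 2)
      (𝓝[Set.Ioo (0:ℝ) 1] 1) (𝓝 (s ^ 2 + x)) := by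
  have hr : Tendsto (fun q : ℝ => (φ q - (1 - (1 - q) ^ 2 * x / 2)) / (1 - q) ^ 2)
      (𝓝[Set.Ioo (0:ℝ) 1] 1) (𝓝 0) := hφ.tendsto_div_nhds_zero
  have hcomb : Tendsto (fun q : ℝ => (awE s q) ^ 2 +
      q ^ s * (x - 2 * ((φ q - (1 - (1 - q) ^ 2 * x / 2)) / (1 - q) ^ 2)))
      (𝓝[Set.Ioo (0:ℝ) 1] 1) (𝓝 (s ^ 2 + x)) := by
    have h := ((awE_tendsto s).pow 2).add
      ((awRpow_tendsto s).mul ((tendsto_const_nhds (x := x)).sub (hr.const_mul 2)))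
    simpa using h
  refine hcomb.congr' ?_
  filter_upwards [self_mem_nhdsWithin] with q hq
  have hq0 : (0:ℝ) < q := hq.1
  have hs : (1:ℝ) - q ≠ 0 := sub_ne_zero.mpr hq.2.ne'
  have h2s : q ^ (2 * s) = (q ^ s) ^ 2 := by
    rw [show (2:ℝ) * s = s * 2 by ring, Real.rpow_mul hq0.le,
      show ((2:ℝ):ℝ) = ((2:ℕ):ℝ) by norm_num, Real.rpow_natCast]
  rw [awE, h2s]
  field_simp
  ring

lemma awRpow_ne_one {q t : ℝ} (hq0 : 0 < q) (hq1 : q < 1) (ht : t ≠ 0) : q ^ t ≠ 1 := by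
  rcases ht.lt_or_gt with h | h
  · exact ne_of_gt (Real.one_lt_rpow_iff_of_pos hq0 |>.mpr (Or.inr ⟨hq1, h⟩))
  · exact ne_of_lt ((Real.rpow_lt_one_iff_of_pos hq0).mpr (Or.inr ⟨hq1, h⟩))

lemma awQPoch_eq {q : ℝ} (hq0 : 0 < q) (hs : (1:ℝ) - q ≠ 0) (z : ℝ) (k : ℕ) :
    qPoch q (q ^ z) k = (∏ j ∈ range k, awE (z + (j:ℝ)) q) * (1 - q) ^ k := by
  rw [qPoch, show ((1:ℝ) - q) ^ k = ∏ _j ∈ range k, (1 - q) by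
    rw [prod_const, card_range], ← prod_mul_distrib]
  refine prod_congr rfl fun j _ => ?_
  rw [awE, div_mul_cancel₀ _ hs, ← Real.rpow_natCast q j, ← Real.rpow_add hq0]

end AWAux
section AWAux2

open Finset

lemma awProdG_eq {q : ℝ} (hq0 : 0 < q) (hs : (1:ℝ) - q ≠ 0) (a y : ℝ) (k : ℕ) :
    ∏ j ∈ range k, (1 - 2 * q ^ a * q ^ j * y + (q ^ a) ^ 2 * q ^ (2 * j)) =
      (∏ j ∈ range k, (1 - 2 * q ^ (a + (j:ℝ)) * y + q ^ (2 * (a + (j:ℝ)))) / (1 - q) ^ 2) *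
        ((1 - q) ^ k) ^ 2 := by
  rw [show ((((1:ℝ) - q) ^ k) ^ 2) = ∏ _j ∈ range k, ((1 - q) ^ 2) by
      rw [prod_const, card_range, ← pow_mul, ← pow_mul, mul_comm],
    ← prod_mul_distrib]
  refine prod_congr rfl fun j _ => ?_
  rw [div_mul_cancel₀ _ (pow_ne_zero 2 hs)]
  have e1 : q ^ a * q ^ (j:ℕ) = q ^ (a + (j:ℝ)) := by
    rw [← Real.rpow_natCast q j, ← Real.rpow_add hq0]
  have e2 : (q ^ a) ^ 2 * q ^ (2 * j) = q ^ (2 * (a + (j:ℝ))) := by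
    rw [← Real.rpow_natCast (q ^ a) 2, ← Real.rpow_natCast q (2 * j),
      ← Real.rpow_mul hq0.le, ← Real.rpow_add hq0]
    congr 1
    push_cast
    ring
  calc 1 - 2 * q ^ a * q ^ j * y + (q ^ a) ^ 2 * q ^ (2 * j)
      = 1 - 2 * (q ^ a * q ^ j) * y + (q ^ a) ^ 2 * q ^ (2 * j) := by ring
    _ = 1 - 2 * q ^ (a + (j:ℝ)) * y + q ^ (2 * (a + (j:ℝ))) := by rw [e1, e2]

lemma awCancelFull {s : ℝ} (hs : s ≠ 0) (n k : ℕ) (P E1 E2 E3 A B C D E F G u : ℝ) :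
    s ^ (-(3 * n : ℤ)) * (P * (E1 * s ^ n) * (E2 * s ^ n) * (E3 * s ^ n) *
      (A * s ^ k * (B * s ^ k) * u / (C * s ^ k * (D * s ^ k) * (E * s ^ k) * (F * s ^ k)) *
        (G * (s ^ k) ^ 2))) =
    P * E1 * E2 * E3 * (u * (A * B * G / (C * D * E * F))) := by
  have hzn : s ^ (-(3 * n : ℤ)) = ((s ^ n) ^ 3)⁻¹ := by
    rw [zpow_neg, show (3 * n : ℤ) = ((n * 3 : ℕ) : ℤ) by push_cast; ring, zpow_natCast, pow_mul]
  have step1 : A * s ^ k * (B * s ^ k) * u /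
        (C * s ^ k * (D * s ^ k) * (E * s ^ k) * (F * s ^ k)) * (G * (s ^ k) ^ 2)
      = u * (A * B * G / (C * D * E * F)) := by
    rw [show A * s ^ k * (B * s ^ k) * u /
          (C * s ^ k * (D * s ^ k) * (E * s ^ k) * (F * s ^ k)) * (G * (s ^ k) ^ 2)
        = u * (A * B * G) * (s ^ k) ^ 4 / (C * D * E * F * (s ^ k) ^ 4) by ring,
      mul_div_mul_right _ _ (pow_ne_zero 4 (pow_ne_zero k hs)), mul_div_assoc]
  rw [step1, hzn,
    show ((s ^ n) ^ 3)⁻¹ * (P * (E1 * s ^ n) * (E2 * s ^ n) * (E3 * s ^ n) *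
        (u * (A * B * G / (C * D * E * F))))
      = P * E1 * E2 * E3 * (u * (A * B * G / (C * D * E * F))) * ((s ^ n) ^ 3 * ((s ^ n) ^ 3)⁻¹)
      by ring,
    mul_inv_cancel₀ (pow_ne_zero 3 (pow_ne_zero n hs)), mul_one]

lemma awKey (n : ℕ) (a b c d y : ℝ) {q : ℝ} (hq0 : 0 < q) (hq1 : q < 1) :
    (1 - q) ^ (-(3 * n : ℤ)) * askeyWilson q (q ^ a) (q ^ b) (q ^ c) (q ^ d) n y =
    (q ^ a) ^ (-(n : ℤ)) * (∏ j ∈ range n, awE (a + b + (j:ℝ)) q) *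
      (∏ j ∈ range n, awE (a + c + (j:ℝ)) q) *
      (∏ j ∈ range n, awE (a + d + (j:ℝ)) q) *
      ∑ k ∈ range (n + 1), q ^ k * ∏ j ∈ range k,
        awE (-(n:ℝ) + (j:ℝ)) q * awE ((n:ℝ) + a + b + c + d - 1 + (j:ℝ)) q *
          ((1 - 2 * q ^ (a + (j:ℝ)) * y + q ^ (2 * (a + (j:ℝ)))) / (1 - q) ^ 2) /
          (awE (a + b + (j:ℝ)) q * awE (a + c + (j:ℝ)) q * awE (a + d + (j:ℝ)) q *
            awE (1 + (j:ℝ)) q) := by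
  have hs : (1:ℝ) - q ≠ 0 := sub_ne_zero.mpr hq1.ne'
  have hAB : q ^ a * q ^ b = q ^ (a + b) := (Real.rpow_add hq0 a b).symm
  have hAC : q ^ (a + b) * q ^ c = q ^ (a + b + c) := (Real.rpow_add hq0 _ c).symm
  have hAD : q ^ (a + b + c) * q ^ d = q ^ (a + b + c + d) := (Real.rpow_add hq0 _ d).symm
  have hAB2 : q ^ a * q ^ c = q ^ (a + c) := (Real.rpow_add hq0 a c).symm
  have hAB3 : q ^ a * q ^ d = q ^ (a + d) := (Real.rpow_add hq0 a d).symm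
  have hQn : q ^ (-(n : ℤ)) = q ^ (-(n:ℝ)) := by
    rw [← Real.rpow_intCast q (-(n:ℤ))]; norm_num
  have h5 : q ^ (a + b + c + d) * q ^ ((n : ℤ) - 1) = q ^ ((n:ℝ) + a + b + c + d - 1) := by
    rw [← Real.rpow_intCast q ((n:ℤ) - 1), ← Real.rpow_add hq0]
    congr 1
    push_cast
    ring
  have hQQ : ∀ m : ℕ, qPoch q q m = (∏ j ∈ range m, awE (1 + (j:ℝ)) q) * (1 - q) ^ m := by
    intro m
    rw [show qPoch q q m = qPoch q (q ^ (1:ℝ)) m by rw [Real.rpow_one], awQPoch_eq hq0 hs]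
  rw [askeyWilson, Finset.mul_sum, Finset.mul_sum, Finset.mul_sum]
  refine Finset.sum_congr rfl fun k hk => ?_
  simp only [hAB, hAC, hAD, hAB2, hAB3, hQn, h5, hQQ, awQPoch_eq hq0 hs,
    awProdG_eq hq0 hs a y]
  rw [awCancelFull hs]
  simp only [Finset.prod_div_distrib, Finset.prod_mul_distrib]

lemma awValue (n : ℕ) (a b c d x : ℝ) :
    (1:ℝ) * (∏ j ∈ range n, (a + b + (j:ℝ))) * (∏ j ∈ range n, (a + c + (j:ℝ))) *
      (∏ j ∈ range n, (a + d + (j:ℝ))) *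
      ∑ k ∈ range (n + 1), (1:ℝ) * ∏ j ∈ range k,
        (-(n:ℝ) + (j:ℝ)) * ((n:ℝ) + a + b + c + d - 1 + (j:ℝ)) * ((a + (j:ℝ)) ^ 2 + x) /
          ((a + b + (j:ℝ)) * (a + c + (j:ℝ)) * (a + d + (j:ℝ)) * (1 + (j:ℝ))) =
    wilson a b c d n x := by
  rw [wilson, one_mul]
  unfold poch
  congr 1
  refine Finset.sum_congr rfl fun k _ => ?_
  rw [one_mul]
  have hfact : (Nat.factorial k : ℝ) = ∏ j ∈ range k, (1 + (j:ℝ)) := by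
    rw [← Finset.prod_range_add_one_eq_factorial k]
    push_cast
    exact prod_congr rfl fun j _ => by ring
  rw [hfact]
  simp only [Finset.prod_div_distrib, Finset.prod_mul_distrib]
  ring

end AWAux2
/-- Limit from Askey–Wilson polynomials to Wilson polynomials, generalized form (13)
of the paper: the argument may be perturbed by `o((1-q)^2)`. -/
theorem askeyWilson_tendsto_wilson_general (n : ℕ) (a b c d : ℝ)
    (hab : ∀ k : ℕ, k < n → a + b + (k : ℝ) ≠ 0)
    (hac : ∀ k : ℕ, k < n → a + c + (k : ℝ) ≠ 0)
    (had : ∀ k : ℕ, k < n → a + d + (k : ℝ) ≠ 0) (x : ℝ) (φ : ℝ → ℝ)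
    (hφ : (fun q : ℝ => φ q - (1 - (1 - q) ^ 2 * x / 2))
      =o[𝓝[Set.Ioo (0 : ℝ) 1] 1] fun q : ℝ => (1 - q) ^ 2) :
    Tendsto (fun q : ℝ => (1 - q) ^ (-(3 * n : ℤ)) *
        askeyWilson q (q ^ a) (q ^ b) (q ^ c) (q ^ d) n (φ q))
      (𝓝[Set.Ioo (0 : ℝ) 1] 1) (𝓝 (wilson a b c d n x)) := by
  have h0 : Tendsto (fun q : ℝ => (q ^ a) ^ (-(n : ℤ))) (𝓝[Set.Ioo (0 : ℝ) 1] 1) (𝓝 1) := by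
    have hc : ContinuousAt (fun y : ℝ => y ^ (-(n : ℤ))) 1 :=
      continuousAt_zpow₀ _ _ (Or.inl one_ne_zero)
    have h := hc.tendsto.comp (awRpow_tendsto a)
    simpa [Function.comp_def] using h
  have h1 : Tendsto (fun q : ℝ => ∏ j ∈ Finset.range n, awE (a + b + (j:ℝ)) q)
      (𝓝[Set.Ioo (0 : ℝ) 1] 1) (𝓝 (∏ j ∈ Finset.range n, (a + b + (j:ℝ)))) :=
    tendsto_finset_prod _ fun j _ => awE_tendsto _
  have h2 : Tendsto (fun q : ℝ => ∏ j ∈ Finset.range n, awE (a + c + (j:ℝ)) q)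
      (𝓝[Set.Ioo (0 : ℝ) 1] 1) (𝓝 (∏ j ∈ Finset.range n, (a + c + (j:ℝ)))) :=
    tendsto_finset_prod _ fun j _ => awE_tendsto _
  have h3 : Tendsto (fun q : ℝ => ∏ j ∈ Finset.range n, awE (a + d + (j:ℝ)) q)
      (𝓝[Set.Ioo (0 : ℝ) 1] 1) (𝓝 (∏ j ∈ Finset.range n, (a + d + (j:ℝ)))) :=
    tendsto_finset_prod _ fun j _ => awE_tendsto _
  have hS : Tendsto (fun q : ℝ => ∑ k ∈ Finset.range (n + 1), q ^ k * ∏ j ∈ Finset.range k,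
        awE (-(n:ℝ) + (j:ℝ)) q * awE ((n:ℝ) + a + b + c + d - 1 + (j:ℝ)) q *
          ((1 - 2 * q ^ (a + (j:ℝ)) * φ q + q ^ (2 * (a + (j:ℝ)))) / (1 - q) ^ 2) /
          (awE (a + b + (j:ℝ)) q * awE (a + c + (j:ℝ)) q * awE (a + d + (j:ℝ)) q *
            awE (1 + (j:ℝ)) q))
      (𝓝[Set.Ioo (0 : ℝ) 1] 1)
      (𝓝 (∑ k ∈ Finset.range (n + 1), (1:ℝ) * ∏ j ∈ Finset.range k,
        (-(n:ℝ) + (j:ℝ)) * ((n:ℝ) + a + b + c + d - 1 + (j:ℝ)) * ((a + (j:ℝ)) ^ 2 + x) /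
          ((a + b + (j:ℝ)) * (a + c + (j:ℝ)) * (a + d + (j:ℝ)) * (1 + (j:ℝ))))) := by
    refine tendsto_finset_sum _ fun k hk => ?_
    have hpow : Tendsto (fun q : ℝ => q ^ k) (𝓝[Set.Ioo (0 : ℝ) 1] 1) (𝓝 1) := by
      simpa using ((continuous_pow k).tendsto (1:ℝ)).mono_left nhdsWithin_le_nhds
    refine hpow.mul (tendsto_finset_prod _ fun j hj => ?_)
    have hjn : j < n := lt_of_lt_of_le (Finset.mem_range.mp hj)
      (Nat.lt_succ_iff.mp (Finset.mem_range.mp hk))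
    have hne : (a + b + (j:ℝ)) * (a + c + (j:ℝ)) * (a + d + (j:ℝ)) * (1 + (j:ℝ)) ≠ 0 := by
      refine mul_ne_zero (mul_ne_zero (mul_ne_zero (hab j hjn) (hac j hjn)) (had j hjn)) ?_
      positivity
    exact Tendsto.div
      (((awE_tendsto _).mul (awE_tendsto _)).mul (awG_tendsto (a + (j:ℝ)) x φ hφ))
      ((((awE_tendsto _).mul (awE_tendsto _)).mul (awE_tendsto _)).mul (awE_tendsto _)) hne
  have hmain := (((h0.mul h1).mul h2).mul h3).mul hS
  have heq : (fun q : ℝ => (q ^ a) ^ (-(n : ℤ)) *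
        (∏ j ∈ Finset.range n, awE (a + b + (j:ℝ)) q) *
        (∏ j ∈ Finset.range n, awE (a + c + (j:ℝ)) q) *
        (∏ j ∈ Finset.range n, awE (a + d + (j:ℝ)) q) *
        ∑ k ∈ Finset.range (n + 1), q ^ k * ∏ j ∈ Finset.range k,
          awE (-(n:ℝ) + (j:ℝ)) q * awE ((n:ℝ) + a + b + c + d - 1 + (j:ℝ)) q *
            ((1 - 2 * q ^ (a + (j:ℝ)) * φ q + q ^ (2 * (a + (j:ℝ)))) / (1 - q) ^ 2) /
            (awE (a + b + (j:ℝ)) q * awE (a + c + (j:ℝ)) q * awE (a + d + (j:ℝ)) q *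
              awE (1 + (j:ℝ)) q))
      =ᶠ[𝓝[Set.Ioo (0 : ℝ) 1] 1]
      (fun q : ℝ => (1 - q) ^ (-(3 * n : ℤ)) *
        askeyWilson q (q ^ a) (q ^ b) (q ^ c) (q ^ d) n (φ q)) := by
    filter_upwards [self_mem_nhdsWithin] with q hq
    exact (awKey n a b c d (φ q) hq.1 hq.2).symm
  have hfinal := hmain.congr' heq
  rwa [awValue n a b c d x] at hfinal
end

section
/- Fix a nonnegative integer n, real numbers a, b, c, d such that none of a+b, a+c, a+d lies in {0, −1, …, −(n−1)}, and a real number y. Then lim_{q↑1} (1−q)^{−3n} p_n( cos(y ln q) ; q^a, q^b, q^c, q^d | q ) = W_n(y²; a, b, c, d), where the limit is taken as q tends to 1 from within (0,1). -/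
open Filter Topology Asymptotics

section AuxLimits

open Filter Topology

private lemma aux_ioo_sub : Set.Ioo (0:ℝ) 1 ⊆ {x : ℝ | x ≠ 1} := fun _ hx => ne_of_lt hx.2

private lemma aux_slope_tendsto {f : ℝ → ℝ} {f' : ℝ} (h : HasDerivAt f f' 1) :
    Tendsto (fun q : ℝ => (f 1 - f q) / (1 - q)) (𝓝[Set.Ioo (0:ℝ) 1] 1) (𝓝 f') := by
  have h2 := hasDerivAt_iff_tendsto_slope.1 h
  have h3 := h2.mono_left (nhdsWithin_mono _ aux_ioo_sub)
  refine h3.congr fun q => ?_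
  rw [slope_def_field]
  rw [show f 1 - f q = -(f q - f 1) by ring, show (1:ℝ) - q = -(q-1) by ring, neg_div_neg_eq]

private lemma aux_key1 (t : ℝ) :
    Tendsto (fun q : ℝ => (1 - q ^ t) / (1 - q)) (𝓝[Set.Ioo (0:ℝ) 1] 1) (𝓝 t) := by
  have h : HasDerivAt (fun q : ℝ => q ^ t) (t * (1:ℝ) ^ (t - 1)) 1 :=
    Real.hasDerivAt_rpow_const (Or.inl one_ne_zero)
  have := aux_slope_tendsto h
  simp only [Real.one_rpow, mul_one, Real.one_rpow] at this
  simpa using this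

private lemma aux_key_log :
    Tendsto (fun q : ℝ => (0 - Real.log q) / (1 - q)) (𝓝[Set.Ioo (0:ℝ) 1] 1) (𝓝 1) := by
  have h : HasDerivAt Real.log 1 1 := by simpa using Real.hasDerivAt_log one_ne_zero
  simpa using aux_slope_tendsto h

private lemma aux_key_sin (y : ℝ) :
    Tendsto (fun q : ℝ => Real.sin (y * Real.log q / 2) / (1 - q)) (𝓝[Set.Ioo (0:ℝ) 1] 1)
      (𝓝 (-(y / 2))) := by
  rcases eq_or_ne y 0 with rfl | hy
  · simpa using tendsto_const_nhds (α := ℝ) (f := 𝓝[Set.Ioo (0:ℝ) 1] (1:ℝ)) (a := (0:ℝ))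
  · have hsin : Tendsto (fun v : ℝ => Real.sin v / v) (𝓝[≠] 0) (𝓝 1) := by
      have h : HasDerivAt Real.sin 1 0 := by simpa using Real.hasDerivAt_sin 0
      have h2 := hasDerivAt_iff_tendsto_slope.1 h
      refine h2.congr fun v => ?_
      simp [slope_def_field]
    have hv : Tendsto (fun q : ℝ => y * Real.log q / 2) (𝓝[Set.Ioo (0:ℝ) 1] 1) (𝓝[≠] 0) := by
      rw [tendsto_nhdsWithin_iff]
      constructor
      · have : Tendsto (fun q : ℝ => y * Real.log q / 2) (𝓝[Set.Ioo (0:ℝ) 1] 1)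
            (𝓝 (y * Real.log 1 / 2)) := by
          apply Tendsto.mono_left _ nhdsWithin_le_nhds
          exact (Real.continuousAt_log one_ne_zero).const_mul y |>.div_const 2
        simpa using this
      · filter_upwards [self_mem_nhdsWithin] with q hq
        have hlog : Real.log q ≠ 0 := ne_of_lt (Real.log_neg hq.1 hq.2)
        simp [hy, hlog]
    have h1 : Tendsto (fun q : ℝ => (Real.sin (y * Real.log q / 2) / (y * Real.log q / 2)) *
        (y / 2 * (Real.log q / (1 - q)))) (𝓝[Set.Ioo (0:ℝ) 1] 1) (𝓝 (1 * (y / 2 * (-1)))) := by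
      refine (hsin.comp hv).mul (Tendsto.const_mul _ ?_)
      have h2 : Tendsto (fun q : ℝ => -((0 - Real.log q) / (1 - q))) (𝓝[Set.Ioo (0:ℝ) 1] 1)
          (𝓝 (-1)) := aux_key_log.neg
      refine h2.congr fun q => by ring
    have hev : (fun q : ℝ => (Real.sin (y * Real.log q / 2) / (y * Real.log q / 2)) *
        (y / 2 * (Real.log q / (1 - q)))) =ᶠ[𝓝[Set.Ioo (0:ℝ) 1] 1]
        (fun q : ℝ => Real.sin (y * Real.log q / 2) / (1 - q)) := by
      filter_upwards [self_mem_nhdsWithin] with q hq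
      have hlog : Real.log q ≠ 0 := ne_of_lt (Real.log_neg hq.1 hq.2)
      have hq1 : (1:ℝ) - q ≠ 0 := by have := hq.2; intro h; linarith
      have hv0 : y * Real.log q / 2 ≠ 0 := by
        simp only [div_ne_zero_iff, mul_ne_zero_iff]
        exact ⟨⟨hy, hlog⟩, two_ne_zero⟩
      field_simp
    have h2 := h1.congr' hev
    convert h2 using 1
    norm_num

private lemma aux_rpow_tendsto (t : ℝ) :
    Tendsto (fun q : ℝ => q ^ t) (𝓝[Set.Ioo (0:ℝ) 1] 1) (𝓝 1) := by
  have : ContinuousAt (fun q : ℝ => q ^ t) 1 :=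
    Real.continuousAt_rpow_const 1 t (Or.inl one_ne_zero)
  simpa using this.continuousWithinAt.tendsto

private lemma aux_key_cos (y s : ℝ) :
    Tendsto (fun q : ℝ => (1 - 2 * q ^ s * Real.cos (y * Real.log q) + (q ^ s) ^ 2) / (1 - q) ^ 2)
      (𝓝[Set.Ioo (0:ℝ) 1] 1) (𝓝 (s ^ 2 + y ^ 2)) := by
  have hid : ∀ q : ℝ, (1 - 2 * q ^ s * Real.cos (y * Real.log q) + (q ^ s) ^ 2) / (1 - q) ^ 2
      = ((1 - q ^ s) / (1 - q)) ^ 2 +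
        4 * q ^ s * (Real.sin (y * Real.log q / 2) / (1 - q)) ^ 2 := by
    intro q
    have hcos : 1 - Real.cos (y * Real.log q) = 2 * Real.sin (y * Real.log q / 2) ^ 2 := by
      have h1 := Real.cos_sq (y * Real.log q / 2)
      rw [show 2 * (y * Real.log q / 2) = y * Real.log q by ring] at h1
      have h2 := Real.sin_sq_add_cos_sq (y * Real.log q / 2)
      linarith
    have : 1 - 2 * q ^ s * Real.cos (y * Real.log q) + (q ^ s) ^ 2
        = (1 - q ^ s) ^ 2 + 4 * q ^ s * Real.sin (y * Real.log q / 2) ^ 2 := by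
      nlinarith [hcos]
    rw [this]
    field_simp
  simp only [hid]
  have h1 := (aux_key1 s).pow 2
  have h2 := ((aux_rpow_tendsto s).const_mul 4).mul ((aux_key_sin y).pow 2)
  have h3 := h1.add h2
  convert h3 using 2
  ring

private lemma aux_key_qpoch (t : ℝ) (k : ℕ) :
    Tendsto (fun q : ℝ => qPoch q (q ^ t) k / (1 - q) ^ k) (𝓝[Set.Ioo (0:ℝ) 1] 1)
      (𝓝 (poch t k)) := by
  have h : Tendsto (fun q : ℝ => ∏ j ∈ Finset.range k, (1 - q ^ (t + (j:ℝ))) / (1 - q))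
      (𝓝[Set.Ioo (0:ℝ) 1] 1) (𝓝 (∏ j ∈ Finset.range k, (t + (j:ℝ)))) :=
    tendsto_finset_prod _ (fun j _ => aux_key1 (t + j))
  rw [show (∏ j ∈ Finset.range k, (t + (j:ℝ))) = poch t k from rfl] at h
  refine h.congr' ?_
  filter_upwards [self_mem_nhdsWithin] with q hq
  rw [qPoch, Finset.prod_div_distrib, Finset.prod_const, Finset.card_range]
  congr 1
  refine Finset.prod_congr rfl fun j _ => ?_
  rw [← Real.rpow_natCast q j, ← Real.rpow_add hq.1]

private lemma aux_key_prodcos (a y : ℝ) (k : ℕ) :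
    Tendsto (fun q : ℝ =>
        (∏ j ∈ Finset.range k,
          (1 - 2 * q ^ a * q ^ j * Real.cos (y * Real.log q) + (q ^ a) ^ 2 * q ^ (2 * j))) /
        (1 - q) ^ (2 * k))
      (𝓝[Set.Ioo (0:ℝ) 1] 1) (𝓝 (∏ j ∈ Finset.range k, ((a + (j:ℝ)) ^ 2 + y ^ 2))) := by
  have h : Tendsto (fun q : ℝ => ∏ j ∈ Finset.range k,
      (1 - 2 * q ^ (a + (j:ℝ)) * Real.cos (y * Real.log q) + (q ^ (a + (j:ℝ))) ^ 2) / (1 - q) ^ 2)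
      (𝓝[Set.Ioo (0:ℝ) 1] 1) (𝓝 (∏ j ∈ Finset.range k, ((a + (j:ℝ)) ^ 2 + y ^ 2))) :=
    tendsto_finset_prod _ (fun j _ => aux_key_cos y (a + j))
  refine h.congr' ?_
  filter_upwards [self_mem_nhdsWithin] with q hq
  rw [Finset.prod_div_distrib, Finset.prod_const, Finset.card_range, ← pow_mul,
    mul_comm 2 k, pow_mul, ← pow_mul]
  rw [mul_comm k 2]
  congr 1
  refine Finset.prod_congr rfl fun j _ => ?_
  have e1 : q ^ (a + (j:ℝ)) = q ^ a * q ^ j := by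
    rw [Real.rpow_add hq.1, Real.rpow_natCast]
  rw [e1]
  ring_nf

private lemma aux_poch_one (k : ℕ) : poch 1 k = (Nat.factorial k : ℝ) := by
  induction k with
  | zero => simp [poch]
  | succ m ih =>
    rw [poch, Finset.prod_range_succ, ← poch, ih, Nat.factorial_succ]
    push_cast
    ring

private lemma aux_poch_ne (z : ℝ) (n k : ℕ) (hk : k ≤ n)
    (h : ∀ j : ℕ, j < n → z + (j:ℝ) ≠ 0) : poch z k ≠ 0 := by
  rw [poch]
  exact Finset.prod_ne_zero_iff.2 fun j hj =>
    h j (lt_of_lt_of_le (Finset.mem_range.1 hj) hk)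

private lemma aux_term_eq (e : ℝ) (he : e ≠ 0) (k : ℕ) (N1 N2 qk D1 D2 D3 D4 P : ℝ) :
    N1 * N2 * qk / (D1 * D2 * D3 * D4) * P =
      (N1 / e ^ k) * (N2 / e ^ k) * qk /
        ((D1 / e ^ k) * (D2 / e ^ k) * (D3 / e ^ k) * (D4 / e ^ k)) * (P / e ^ (2 * k)) := by
  have hE : e ^ k ≠ 0 := pow_ne_zero _ he
  have h2k : e ^ (2 * k) = (e ^ k) ^ 2 := by rw [← pow_mul, Nat.mul_comm]
  rw [h2k]
  set E := e ^ k with hEdef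
  have h1 : (N1 / E) * (N2 / E) * qk * (P / E ^ 2) = (N1 * N2 * qk * P) / E ^ 4 := by
    field_simp
  have h2 : (D1 / E) * (D2 / E) * (D3 / E) * (D4 / E) = (D1 * D2 * D3 * D4) / E ^ 4 := by
    field_simp
  calc N1 * N2 * qk / (D1 * D2 * D3 * D4) * P
      = (N1 * N2 * qk * P) / E ^ 4 / ((D1 * D2 * D3 * D4) / E ^ 4) := by
        rw [div_div_div_cancel_right₀ (by positivity : (E:ℝ)^4 ≠ 0)]; ring
    _ = (N1 / E) * (N2 / E) * qk / ((D1 / E) * (D2 / E) * (D3 / E) * (D4 / E)) * (P / E ^ 2) := by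
        rw [h2, ← h1]; ring

private lemma aux_assemble (e X A B D : ℝ) (he : e ≠ 0) (n : ℕ) (f g : ℕ → ℝ)
    (hfg : ∀ k, g k = f k) :
    X * (A / e ^ n) * (B / e ^ n) * (D / e ^ n) * (∑ k ∈ Finset.range (n+1), g k)
      = e ^ (-(3 * (n:ℤ))) * (X * A * B * D * ∑ k ∈ Finset.range (n+1), f k) := by
  simp only [hfg]
  rw [zpow_neg, show (3 * (n:ℤ)) = ((3*n : ℕ) : ℤ) by push_cast; ring, zpow_natCast]
  simp only [div_eq_mul_inv, mul_inv, ← pow_mul]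
  ring

end AuxLimits

/-- Limit from Askey–Wilson polynomials to Wilson polynomials, formula (12) of the paper. -/
theorem askeyWilson_tendsto_wilson_cos (n : ℕ) (a b c d : ℝ)
    (hab : ∀ k : ℕ, k < n → a + b + (k : ℝ) ≠ 0)
    (hac : ∀ k : ℕ, k < n → a + c + (k : ℝ) ≠ 0)
    (had : ∀ k : ℕ, k < n → a + d + (k : ℝ) ≠ 0) (y : ℝ) :
    Tendsto (fun q : ℝ => (1 - q) ^ (-(3 * n : ℤ)) *
        askeyWilson q (q ^ a) (q ^ b) (q ^ c) (q ^ d) n (Real.cos (y * Real.log q)))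
      (𝓝[Set.Ioo (0 : ℝ) 1] 1) (𝓝 (wilson a b c d n (y ^ 2))) := by
  have hqk : ∀ k : ℕ, Tendsto (fun q : ℝ => q ^ k) (𝓝[Set.Ioo (0:ℝ) 1] 1) (𝓝 1) := fun k => by
    simpa using ((continuous_pow k).tendsto (1:ℝ)).mono_left nhdsWithin_le_nhds
  have hX : Tendsto (fun q : ℝ => (q ^ a) ^ (-(n:ℤ))) (𝓝[Set.Ioo (0:ℝ) 1] 1) (𝓝 1) := by
    have hc : ContinuousAt (fun x : ℝ => x ^ (-(n:ℤ))) 1 :=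
      continuousAt_zpow₀ _ _ (Or.inl one_ne_zero)
    have := hc.tendsto.comp (aux_rpow_tendsto a)
    simpa [Function.comp_def] using this
  have hsum : Tendsto (fun q : ℝ => ∑ k ∈ Finset.range (n+1),
      qPoch q (q ^ (-(n:ℝ))) k / (1-q)^k * (qPoch q (q ^ ((n:ℝ)+a+b+c+d-1)) k / (1-q)^k) * q^k /
       (qPoch q (q^(a+b)) k/(1-q)^k * (qPoch q (q^(a+c)) k/(1-q)^k) *
         (qPoch q (q^(a+d)) k/(1-q)^k) * (qPoch q (q^(1:ℝ)) k/(1-q)^k)) *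
       ((∏ j ∈ Finset.range k,
         (1 - 2*q^a*q^j*Real.cos (y*Real.log q) + (q^a)^2*q^(2*j)))/(1-q)^(2*k)))
      (𝓝[Set.Ioo (0:ℝ) 1] 1)
      (𝓝 (∑ k ∈ Finset.range (n+1),
        poch (-(n:ℝ)) k * poch ((n:ℝ)+a+b+c+d-1) k * 1 /
        (poch (a+b) k * poch (a+c) k * poch (a+d) k * poch 1 k) *
        (∏ j ∈ Finset.range k, ((a+(j:ℝ))^2 + y^2)))) := by
    refine tendsto_finset_sum _ fun k hk => ?_
    have hk' : k ≤ n := Nat.lt_succ_iff.1 (Finset.mem_range.1 hk)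
    have hfac : poch 1 k ≠ 0 := by
      rw [aux_poch_one]
      exact_mod_cast Nat.factorial_ne_zero k
    have hne : poch (a+b) k * poch (a+c) k * poch (a+d) k * poch 1 k ≠ 0 :=
      mul_ne_zero (mul_ne_zero (mul_ne_zero (aux_poch_ne _ n k hk' hab)
        (aux_poch_ne _ n k hk' hac)) (aux_poch_ne _ n k hk' had)) hfac
    exact ((((aux_key_qpoch (-(n:ℝ)) k).mul (aux_key_qpoch ((n:ℝ)+a+b+c+d-1) k)).mul
      (hqk k)).div ((((aux_key_qpoch (a+b) k).mul (aux_key_qpoch (a+c) k)).mul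
      (aux_key_qpoch (a+d) k)).mul (aux_key_qpoch 1 k)) hne).mul (aux_key_prodcos a y k)
  have hpre : Tendsto (fun q : ℝ => (q^a)^(-(n:ℤ)) * (qPoch q (q^(a+b)) n/(1-q)^n) *
      (qPoch q (q^(a+c)) n/(1-q)^n) * (qPoch q (q^(a+d)) n/(1-q)^n))
      (𝓝[Set.Ioo (0:ℝ) 1] 1) (𝓝 (1 * poch (a+b) n * poch (a+c) n * poch (a+d) n)) :=
    ((hX.mul (aux_key_qpoch (a+b) n)).mul (aux_key_qpoch (a+c) n)).mul (aux_key_qpoch (a+d) n)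
  have hG := hpre.mul hsum
  have hval : (1 * poch (a+b) n * poch (a+c) n * poch (a+d) n) * (∑ k ∈ Finset.range (n+1),
      poch (-(n:ℝ)) k * poch ((n:ℝ)+a+b+c+d-1) k * 1 /
        (poch (a+b) k * poch (a+c) k * poch (a+d) k * poch 1 k) *
        (∏ j ∈ Finset.range k, ((a+(j:ℝ))^2 + y^2))) = wilson a b c d n (y ^ 2) := by
    rw [wilson, one_mul]
    congr 1
    refine Finset.sum_congr rfl fun k _ => ?_
    rw [aux_poch_one]
    ring
  rw [hval] at hG
  refine hG.congr' ?_
  filter_upwards [self_mem_nhdsWithin] with q hq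
  obtain ⟨hq0, hq1⟩ := hq
  have he : (1:ℝ) - q ≠ 0 := by intro h; linarith
  have eab : q ^ (a+b) = q^a * q^b := Real.rpow_add hq0 a b
  have eac : q ^ (a+c) = q^a * q^c := Real.rpow_add hq0 a c
  have ead : q ^ (a+d) = q^a * q^d := Real.rpow_add hq0 a d
  have emn : q ^ (-(n:ℝ)) = (q:ℝ) ^ (-(n:ℤ)) := by
    rw [show -(n:ℝ) = ((-(n:ℤ) : ℤ) : ℝ) by push_cast; ring, Real.rpow_intCast]
  have eabcd : q ^ ((n:ℝ)+a+b+c+d-1) = q^a*q^b*q^c*q^d*(q:ℝ)^((n:ℤ)-1) := by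
    rw [show ((n:ℝ)+a+b+c+d-1) = a+(b+(c+(d+((((n:ℤ)-1 : ℤ)) : ℝ)))) by push_cast; ring,
      Real.rpow_add hq0, Real.rpow_add hq0, Real.rpow_add hq0, Real.rpow_add hq0,
      Real.rpow_intCast]
    ring
  have e1 : q ^ (1:ℝ) = q := Real.rpow_one q
  simp only [askeyWilson]
  rw [eab, eac, ead, emn, eabcd, e1]
  refine aux_assemble (1-q) _ _ _ _ he n _ _ fun k => ?_
  exact (aux_term_eq (1-q) he k _ _ _ _ _ _ _ _).symm
end
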